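/- Let 0 < R < s and R_H = s·ln((s + R)/(s − R)). Define F : (0,1] × (0,2π] → ℝ² by F(η, ζ) = (α·cos ζ, α·sin ζ), where τ = 2s·arsinh(√η·sinh(R_H/(2s))) and α = s·(e^{τ/s} − 1)/(e^{τ/s} + 1). Then the pushforward under F of the product of the uniform probability measures on (0,1] and (0,2π] equals ν_R. (This is the correctness of the Poincaré uniform sampling algorithm: the sampled points are uniformly distributed with respect to hyperbolic area on the disc of Euclidean radius R.) -/

import Mathlib

noncomputable section

open Real MeasureTheory Set
open scoped InnerProductSpace ENNReal NNReal Classical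

/-- Points of the plane `ℝ²`, with the Euclidean inner product and norm. -/
abbrev Pt : Type := EuclideanSpace ℝ (Fin 2)

namespace HypFL

/-- Inverse hyperbolic tangent. -/
def artanh (x : ℝ) : ℝ := (1 / 2) * Real.log ((1 + x) / (1 - x))

/-- The Poincaré disc `B = {x : k‖x‖² < 1}` of curvature `-k`. -/
def disc (k : ℝ) : Set Pt := {x : Pt | k * ‖x‖ ^ 2 < 1}

/-- Möbius addition on the Poincaré disc. -/
def mAdd (k : ℝ) (x y : Pt) : Pt :=
  (1 + 2 * k * ⟪x, y⟫_ℝ + k ^ 2 * ‖x‖ ^ 2 * ‖y‖ ^ 2)⁻¹ •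
    ((1 + 2 * k * ⟪x, y⟫_ℝ + k * ‖y‖ ^ 2) • x + (1 - k * ‖x‖ ^ 2) • y)

/-- Hyperbolic distance on the Poincaré disc. -/
def hdist (k : ℝ) (x y : Pt) : ℝ :=
  (2 / Real.sqrt k) * artanh (Real.sqrt k * ‖mAdd k (-x) y‖)

/-- Logarithmic map at `p`. -/
def logMap (k : ℝ) (p x : Pt) : Pt :=
  if x = p then 0
  else ((((1 - k * ‖p‖ ^ 2) / Real.sqrt k) * artanh (Real.sqrt k * ‖mAdd k (-p) x‖))
      / ‖mAdd k (-p) x‖) • mAdd k (-p) x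

/-- Exponential map at `p`. -/
def expMap (k : ℝ) (p v : Pt) : Pt :=
  if v = 0 then p
  else mAdd k p ((Real.tanh (Real.sqrt k * ‖v‖ / (1 - k * ‖p‖ ^ 2)) / (Real.sqrt k * ‖v‖)) • v)

/-- The geodesic segment `[x, y] = {exp_x (t • log_x y) : t ∈ [0,1]}`. -/
def geoSeg (k : ℝ) (x y : Pt) : Set Pt :=
  (fun t : ℝ => expMap k x (t • logMap k x y)) '' Set.Icc (0 : ℝ) 1

/-- A set is geodesically convex if it contains the geodesic segment between any two
of its points. -/
def GConvex (k : ℝ) (S : Set Pt) : Prop := ∀ x ∈ S, ∀ y ∈ S, geoSeg k x y ⊆ S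

/-- The geodesic convex hull of `D`: the intersection of all geodesically convex subsets
of the Poincaré disc containing `D`. -/
def gconv (k : ℝ) (D : Set Pt) : Set Pt :=
  ⋂₀ {S : Set Pt | S ⊆ disc k ∧ GConvex k S ∧ D ⊆ S}

/-- The set of extreme points of a (finite) set `D`: points `z ∈ D` with
`z ∉ gconv (D \ {z})`. -/
def extremePts (k : ℝ) (D : Set Pt) : Set Pt := {z ∈ D | z ∉ gconv k (D \ {z})}

/-- The `CCW` predicate of the Poincaré Graham scan. -/
def ccw (k : ℝ) (x t z : Pt) : ℝ :=
  (‖logMap k x t‖⁻¹ • logMap k x t) 0 * (‖logMap k x z‖⁻¹ • logMap k x z) 1 -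
    (‖logMap k x t‖⁻¹ • logMap k x t) 1 * (‖logMap k x z‖⁻¹ • logMap k x z) 0

/-- `s = 1/√k`. -/
def sOf (k : ℝ) : ℝ := 1 / Real.sqrt k

end HypFL

namespace HypFL

/-- The hyperbolic area measure on the Poincaré disc: density `4/(1-k‖x‖²)²` with respect
to the two-dimensional Lebesgue measure. -/
def hypArea (k : ℝ) : Measure Pt :=
  volume.withDensity fun x : Pt => ENNReal.ofReal (4 / (1 - k * ‖x‖ ^ 2) ^ 2)

/-- The hyperbolic-uniform probability distribution on the closed Euclidean disc of
radius `R`: the hyperbolic area measure restricted to the disc and normalized. -/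
def nu (k R : ℝ) : Measure Pt :=
  (hypArea k (Metric.closedBall 0 R))⁻¹ • (hypArea k).restrict (Metric.closedBall 0 R)

end HypFL

namespace HypFL

/-- The polar angle of a nonzero point of `ℝ²`, normalized to lie in `(0, 2π]`. -/
def polarAngle (x : Pt) : ℝ :=
  if 0 < Complex.arg ((x 0 : ℂ) + (x 1 : ℂ) * Complex.I) then
    Complex.arg ((x 0 : ℂ) + (x 1 : ℂ) * Complex.I)
  else Complex.arg ((x 0 : ℂ) + (x 1 : ℂ) * Complex.I) + 2 * π

/-- The point of `ℝ²` with Euclidean radius `r` and polar angle `θ`. -/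
def ptPolar (r θ : ℝ) : Pt := WithLp.toLp 2 ![r * Real.cos θ, r * Real.sin θ]

/-- The hyperbolic radius `R_H = s ln((s+R)/(s−R))` corresponding to Euclidean radius `R`. -/
def RH (k R : ℝ) : ℝ := sOf k * Real.log ((sOf k + R) / (sOf k - R))

/-- Number of angular quantization bins: `N_Θ = ⌈4πs sinh(R_H/s)/ε⌉`. -/
def NTheta (k R ε : ℝ) : ℕ := ⌈4 * π * sOf k * Real.sinh (RH k R / sOf k) / ε⌉₊

/-- Number of radial quantization bins: `N_R = ⌈2R_H/ε⌉`. -/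
def NRad (k R ε : ℝ) : ℕ := ⌈2 * RH k R / ε⌉₊

/-- The quantization bin `B(n₁, n₂)`: points whose polar angle lies in
`((n₁−1)·2π/N_Θ, n₁·2π/N_Θ]` and whose hyperbolic distance to the origin lies in
`((n₂−1)·R_H/N_R, n₂·R_H/N_R]`. -/
def qbin (k R ε : ℝ) (n₁ n₂ : ℕ) : Set Pt :=
  {x : Pt |
    polarAngle x ∈ Set.Ioc (((n₁ : ℝ) - 1) * (2 * π / NTheta k R ε))
      ((n₁ : ℝ) * (2 * π / NTheta k R ε)) ∧
    hdist k 0 x ∈ Set.Ioc (((n₂ : ℝ) - 1) * (RH k R / NRad k R ε))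
      ((n₂ : ℝ) * (RH k R / NRad k R ε))}

/-- The Euclidean radius corresponding to hyperbolic radius `h`:
`s(e^{h/s} − 1)/(e^{h/s} + 1)`. -/
def eucOfHyp (k h : ℝ) : ℝ :=
  sOf k * (Real.exp (h / sOf k) - 1) / (Real.exp (h / sOf k) + 1)

/-- The `ε`-Poincaré quantization map `PQ_ε`: each point of the bin `B(n₁, n₂)` is sent to
the bin center, namely the point with polar angle `(n₁ − 1/2)·2π/N_Θ` and hyperbolic
distance `(n₂ − 1/2)·R_H/N_R` from the origin; the origin is fixed. -/
def PQ (k R ε : ℝ) (x : Pt) : Pt :=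
  if x = 0 then 0
  else
    ptPolar
      (eucOfHyp k
        (((⌈hdist k 0 x / (RH k R / NRad k R ε)⌉₊ : ℝ) - 1 / 2) * (RH k R / NRad k R ε)))
      (((⌈polarAngle x / (2 * π / NTheta k R ε)⌉₊ : ℝ) - 1 / 2) * (2 * π / NTheta k R ε))

end HypFL

namespace HypFL

/-
The hyperbolic area element in Euclidean polar coordinates `(r, θ)` is `4r/(1 - kr²)² dr dθ`.
The sampled radius `α(η)` satisfies `kα²/(1 - kα²) = a η` with `a = sinh²(R_H/(2s))` (since
`s tanh(arsinh u)` is the Euclidean radius of hyperbolic radius `2s arsinh u`), so the Jacobian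
`α α'` of `F` times that density is the constant `2 s² a`. By the change of variables formula,
`F` therefore pushes Lebesgue measure on `(0,1] × (0,2π]` forward to a constant multiple of the
hyperbolic area on the disc of radius `α(1) = R`, and the constant is forced by total mass `1`.
-/

lemma map_withDensity_comp {α β : Type*} [MeasurableSpace α] [MeasurableSpace β] (μ : Measure α)
    {f : α → β} (hf : Measurable f) {W : β → ℝ≥0∞} (hW : Measurable W) :
    (μ.withDensity (W ∘ f)).map f = (μ.map f).withDensity W := by
  ext s hs
  rw [Measure.map_apply hf hs, withDensity_apply _ (hf hs), withDensity_apply _ hs,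
    setLIntegral_map hs hW hf]
  rfl

lemma eq_inv_measure_univ_smul_of_eq_smul {α : Type*} [MeasurableSpace α] {P ν : Measure α}
    [hP : IsProbabilityMeasure P] {c : ℝ≥0∞} (h : P = c • ν) : P = (ν univ)⁻¹ • ν := by
  have hc : c * ν univ = 1 := by simpa [h] using measure_univ (μ := P)
  rwa [← ENNReal.eq_inv_of_mul_eq_one_left hc]

lemma injOn_polarCoord_symm (a : ℝ) : InjOn polarCoord.symm (Ioi 0 ×ˢ Ioc a (a + 2 * π)) := by
  rintro ⟨r₁, θ₁⟩ ⟨hr₁, hθ₁⟩ ⟨r₂, θ₂⟩ ⟨hr₂, hθ₂⟩ h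
  simp only [polarCoord_symm_apply, Prod.mk.injEq, mem_Ioi] at h hr₁ hr₂
  obtain ⟨hcos, hsin⟩ := h
  have hr : r₁ = r₂ := by
    refine (sq_eq_sq₀ hr₁.le hr₂.le).1 ?_
    linear_combination (r₁ * cos θ₁ + r₂ * cos θ₂) * hcos + (r₁ * sin θ₁ + r₂ * sin θ₂) * hsin
      - r₁ ^ 2 * sin_sq_add_cos_sq θ₁ + r₂ ^ 2 * sin_sq_add_cos_sq θ₂
  subst hr
  have hθ : (θ₁ : Real.Angle) = θ₂ :=
    Real.Angle.cos_sin_inj (mul_left_cancel₀ hr₁.ne' hcos) (mul_left_cancel₀ hr₁.ne' hsin)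
  have : Fact (0 < 2 * π) := ⟨two_pi_pos⟩
  rw [(AddCircle.coe_eq_coe_iff_of_mem_Ioc (p := 2 * π) (x := θ₁) hθ₁ hθ₂).1 hθ]

lemma polarCoord_symm_image_prod_Ioc (a : ℝ) {J : Set ℝ} (hJ : J ⊆ Ioi 0) :
    polarCoord.symm '' (J ×ˢ Ioc a (a + 2 * π)) = {q | √(q.1 ^ 2 + q.2 ^ 2) ∈ J} := by
  ext q
  constructor
  · rintro ⟨⟨r, θ⟩, ⟨hr, -⟩, rfl⟩
    have hsq : (r * cos θ) ^ 2 + (r * sin θ) ^ 2 = r ^ 2 := by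
      linear_combination r ^ 2 * sin_sq_add_cos_sq θ
    simpa [hsq, sqrt_sq (hJ hr).le] using hr
  · intro hq
    set z : ℂ := ⟨q.1, q.2⟩
    have hz : ‖z‖ = √(q.1 ^ 2 + q.2 ^ 2) := Complex.norm_eq_sqrt_sq_add_sq z
    set θ := toIocMod two_pi_pos a (Complex.arg z)
    have hθ : θ = Complex.arg z - toIocDiv two_pi_pos a (Complex.arg z) * (2 * π) := by
      rw [← self_sub_toIocMod_eq_mul, sub_sub_cancel]
    refine ⟨(‖z‖, θ), ⟨hz ▸ hq, toIocMod_mem_Ioc _ _ _⟩, ?_⟩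
    rw [polarCoord_symm_apply, hθ, cos_sub_int_mul_two_pi, sin_sub_int_mul_two_pi,
      Complex.norm_mul_cos_arg, Complex.norm_mul_sin_arg]

lemma det_fderivPolarCoordSymm_comp_prodMap (r θ g' : ℝ) :
    ((fderivPolarCoordSymm (r, θ)).comp
      ((ContinuousLinearMap.toSpanSingleton ℝ g').prodMap (ContinuousLinearMap.id ℝ ℝ))).det =
      r * g' := by
  rw [ContinuousLinearMap.det, ContinuousLinearMap.toLinearMap_comp, LinearMap.det_comp,
    ← ContinuousLinearMap.det, det_fderivPolarCoordSymm, ContinuousLinearMap.coe_prodMap,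
    LinearMap.det_prodMap, ← ContinuousLinearMap.det, ContinuousLinearMap.det_toSpanSingleton]
  simp

theorem map_withDensity_polarCoord_symm_radial {g g' : ℝ → ℝ} {I : Set ℝ}
    (hI : MeasurableSet I) (hg : ∀ η ∈ I, HasDerivWithinAt g (g' η) I η) (hinj : InjOn g I)
    (hpos : ∀ η ∈ I, 0 < g η) (a : ℝ) :
    ((volume.restrict (I ×ˢ Ioc a (a + 2 * π))).withDensity
        fun p => ENNReal.ofReal |g p.1 * g' p.1|).map (fun p => polarCoord.symm (g p.1, p.2)) =
      volume.restrict {q : ℝ × ℝ | √(q.1 ^ 2 + q.2 ^ 2) ∈ g '' I} := by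
  have hderiv : ∀ p ∈ I ×ˢ Ioc a (a + 2 * π),
      HasFDerivWithinAt (fun p : ℝ × ℝ => polarCoord.symm (g p.1, p.2))
        ((fderivPolarCoordSymm (g p.1, p.2)).comp
          ((ContinuousLinearMap.toSpanSingleton ℝ (g' p.1)).prodMap
            (ContinuousLinearMap.id ℝ ℝ)))
        (I ×ˢ Ioc a (a + 2 * π)) p := fun p hp =>
    (hasFDerivAt_polarCoord_symm _).comp_hasFDerivWithinAt (f := Prod.map g id) p
      (.prodMap p ((hg p.1 hp.1).hasFDerivWithinAt.mono (fst_image_prod_subset _ _))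
        (hasFDerivWithinAt_id _ _))
  have hinj' :
      InjOn (fun p : ℝ × ℝ => polarCoord.symm (g p.1, p.2)) (I ×ˢ Ioc a (a + 2 * π)) :=
    (injOn_polarCoord_symm a).comp (hinj.prodMap (injOn_id _)) fun p hp => ⟨hpos p.1 hp.1, hp.2⟩
  have himage : (fun p : ℝ × ℝ => polarCoord.symm (g p.1, p.2)) '' (I ×ˢ Ioc a (a + 2 * π)) =
      {q : ℝ × ℝ | √(q.1 ^ 2 + q.2 ^ 2) ∈ g '' I} := by
    rw [show (fun p : ℝ × ℝ => polarCoord.symm (g p.1, p.2)) = polarCoord.symm ∘ Prod.map g id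
      from rfl, image_comp, prodMap_image_prod, image_id,
      polarCoord_symm_image_prod_Ioc a (image_subset_iff.2 hpos)]
  simpa only [det_fderivPolarCoordSymm_comp_prodMap, himage] using
    map_withDensity_abs_det_fderiv_eq_addHaar volume
      (hI.prod measurableSet_Ioc).nullMeasurableSet hderiv hinj'

def prodEquivPt : ℝ × ℝ ≃ᵐ Pt :=
  MeasurableEquiv.finTwoArrow.symm.trans (MeasurableEquiv.toLp 2 (Fin 2 → ℝ))

lemma prodEquivPt_polarCoord_symm (r θ : ℝ) :
    prodEquivPt (polarCoord.symm (r, θ)) = ptPolar r θ :=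
  rfl

lemma measurePreserving_prodEquivPt : MeasurePreserving prodEquivPt :=
  (volume_preserving_finTwoArrow ℝ).symm.trans (PiLp.volume_preserving_toLp (Fin 2))

lemma norm_prodEquivPt (q : ℝ × ℝ) : ‖prodEquivPt q‖ = √(q.1 ^ 2 + q.2 ^ 2) := by
  simp [EuclideanSpace.norm_eq, prodEquivPt, Fin.sum_univ_two]

lemma norm_ptPolar (r θ : ℝ) : ‖ptPolar r θ‖ = |r| := by
  rw [← prodEquivPt_polarCoord_symm, norm_prodEquivPt, polarCoord_symm_apply, ← sqrt_sq_eq_abs]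
  congr 1
  linear_combination r ^ 2 * sin_sq_add_cos_sq θ

lemma measurable_ptPolar : Measurable fun p : ℝ × ℝ => ptPolar p.1 p.2 :=
  prodEquivPt.measurable.comp continuous_polarCoord_symm.measurable

theorem map_withDensity_ptPolar_radial {g g' : ℝ → ℝ} {I : Set ℝ} (hI : MeasurableSet I)
    (hgm : Measurable g) (hg'm : Measurable g') (hg : ∀ η ∈ I, HasDerivWithinAt g (g' η) I η)
    (hinj : InjOn g I) (hpos : ∀ η ∈ I, 0 < g η) {W : Pt → ℝ≥0∞} (hW : Measurable W) (a : ℝ) :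
    ((volume.restrict (I ×ˢ Ioc a (a + 2 * π))).withDensity fun p =>
        ENNReal.ofReal |g p.1 * g' p.1| * W (ptPolar (g p.1) p.2)).map
        (fun p => ptPolar (g p.1) p.2) =
      (volume.restrict {x : Pt | ‖x‖ ∈ g '' I}).withDensity W := by
  set f : ℝ × ℝ → ℝ × ℝ := fun p => polarCoord.symm (g p.1, p.2)
  have hfm : Measurable f :=
    continuous_polarCoord_symm.measurable.comp (hgm.prodMap measurable_id)
  have hF : (fun p : ℝ × ℝ => ptPolar (g p.1) p.2) = prodEquivPt ∘ f := rfl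
  have hFm : Measurable (prodEquivPt ∘ f) := prodEquivPt.measurable.comp hfm
  have hJm : Measurable fun p : ℝ × ℝ => ENNReal.ofReal |g p.1 * g' p.1| := by fun_prop
  have himage : prodEquivPt '' {q : ℝ × ℝ | √(q.1 ^ 2 + q.2 ^ 2) ∈ g '' I} =
      {x : Pt | ‖x‖ ∈ g '' I} := by
    ext x
    simp [MeasurableEquiv.image_eq_preimage_symm, ← norm_prodEquivPt]
  rw [hF, ← himage, ← (measurePreserving_prodEquivPt.restrict_image_emb
      prodEquivPt.measurableEmbedding _).map_eq,
    ← map_withDensity_polarCoord_symm_radial hI hg hinj hpos a,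
    Measure.map_map prodEquivPt.measurable hfm,
    ← map_withDensity_comp _ hFm hW, ← withDensity_mul _ hJm (hW.comp hFm)]
  rfl

section

variable {k : ℝ}

lemma sOf_pos (hk : 0 < k) : 0 < sOf k := by
  rw [sOf]; positivity

lemma k_mul_sOf_sq (hk : 0 < k) : k * sOf k ^ 2 = 1 := by
  rw [sOf, div_pow, one_pow, sq_sqrt hk.le]
  field_simp

lemma RH_pos {R : ℝ} (hk : 0 < k) (hR : 0 < R) (hRs : R < sOf k) : 0 < RH k R := by
  have hsR : 0 < sOf k - R := by linarith
  exact mul_pos (sOf_pos hk) (log_pos ((one_lt_div hsR).2 (by linarith)))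

lemma eucOfHyp_eq_tanh (hk : 0 < k) (h : ℝ) :
    eucOfHyp k h = sOf k * tanh (h / (2 * sOf k)) := by
  have hs := sOf_pos hk
  have hexp : exp (h / sOf k) = exp (h / (2 * sOf k)) ^ 2 := by
    rw [← exp_nat_mul]; congr 1; field_simp; ring
  rw [eucOfHyp, tanh_eq, hexp, exp_neg]
  field_simp

lemma eucOfHyp_RH {R : ℝ} (hk : 0 < k) (hR : 0 < R) (hRs : R < sOf k) :
    eucOfHyp k (RH k R) = R := by
  have hs := sOf_pos hk
  have hsR : 0 < sOf k - R := by linarith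
  rw [eucOfHyp, RH, mul_div_cancel_left₀ _ hs.ne', exp_log (by positivity)]
  field_simp
  ring

lemma restrict_hypArea_norm_mem_Ioc (r : ℝ) :
    (hypArea k).restrict {x : Pt | ‖x‖ ∈ Ioc 0 r} =
      (hypArea k).restrict (Metric.closedBall 0 r) := by
  refine Measure.restrict_congr_set ?_
  have hnull : hypArea k {0} = 0 := withDensity_absolutelyContinuous _ _ (measure_singleton 0)
  have hset : {x : Pt | ‖x‖ ∈ Ioc 0 r} = Metric.closedBall 0 r \ {0} := by
    ext x
    simp [norm_pos_iff, and_comm]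
  rw [hset]
  exact sdiff_null_ae_eq_self hnull

variable {S η : ℝ}

def sampleRadius (k S η : ℝ) : ℝ := eucOfHyp k (2 * sOf k * arsinh (√η * S))

lemma sampleRadius_zero : sampleRadius k S 0 = 0 := by
  simp [sampleRadius, eucOfHyp]

lemma sampleRadius_eq (hk : 0 < k) (hS : 0 ≤ S) (hη : 0 ≤ η) :
    sampleRadius k S η = sOf k * √(S ^ 2 * η / (1 + S ^ 2 * η)) := by
  have hs := sOf_pos hk
  rw [sampleRadius, eucOfHyp_eq_tanh hk, mul_div_cancel_left₀ _ (by positivity), tanh_arsinh,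
    mul_pow, sq_sqrt hη, sqrt_div (by positivity), sqrt_mul (sq_nonneg S), sqrt_sq hS]
  ring_nf

lemma k_mul_sampleRadius_sq (hk : 0 < k) (hS : 0 ≤ S) (hη : 0 ≤ η) :
    k * sampleRadius k S η ^ 2 = S ^ 2 * η / (1 + S ^ 2 * η) := by
  rw [sampleRadius_eq hk hS hη, mul_pow, sq_sqrt (by positivity), ← mul_assoc, k_mul_sOf_sq hk,
    one_mul]

lemma continuous_sampleRadius : Continuous (sampleRadius k S) := by
  unfold sampleRadius eucOfHyp
  have h1 : Continuous fun η => exp (2 * sOf k * arsinh (√η * S) / sOf k) :=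
    continuous_exp.comp ((continuous_const.mul
      (continuous_arsinh.comp (continuous_sqrt.mul continuous_const))).div_const _)
  exact (continuous_const.mul (h1.sub continuous_const)).div (h1.add continuous_const)
    fun _ => by positivity

lemma strictMonoOn_sampleRadius (hk : 0 < k) (hS : 0 < S) :
    StrictMonoOn (sampleRadius k S) (Ici 0) := by
  intro η₁ (h₁ : 0 ≤ η₁) η₂ (h₂ : 0 ≤ η₂) h12
  rw [sampleRadius_eq hk hS.le h₁, sampleRadius_eq hk hS.le h₂]
  refine mul_lt_mul_of_pos_left (sqrt_lt_sqrt (by positivity) ?_) (sOf_pos hk)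
  rw [div_lt_div_iff₀ (by positivity) (by positivity)]
  nlinarith [mul_pos (pow_pos hS 2) (sub_pos.2 h12)]

lemma sampleRadius_pos (hk : 0 < k) (hS : 0 < S) (hη : 0 < η) : 0 < sampleRadius k S η := by
  rw [sampleRadius_eq hk hS.le hη.le]
  have := sOf_pos hk
  positivity

lemma sampleRadius_image_Ioc (hk : 0 < k) (hS : 0 < S) :
    sampleRadius k S '' Ioc 0 1 = Ioc 0 (sampleRadius k S 1) := by
  simpa [sampleRadius_zero] using continuous_sampleRadius.continuousOn.image_Ioc_of_strictMonoOn
    zero_le_one ((strictMonoOn_sampleRadius hk hS).mono Icc_subset_Ici_self)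

lemma hasDerivAt_sampleRadius (hk : 0 < k) (hS : 0 < S) (hη : 0 < η) :
    HasDerivAt (sampleRadius k S)
      (sOf k ^ 2 * S ^ 2 / (2 * sampleRadius k S η * (1 + S ^ 2 * η) ^ 2)) η := by
  have hs := sOf_pos hk
  have hφ :
      HasDerivAt (fun t => S ^ 2 * t / (1 + S ^ 2 * t)) (S ^ 2 / (1 + S ^ 2 * η) ^ 2) η := by
    have hlin : HasDerivAt (fun t => S ^ 2 * t) (S ^ 2) η := by
      simpa using (hasDerivAt_id' η).const_mul (S ^ 2)
    refine (hlin.fun_div (hlin.const_add 1) (by positivity)).congr_deriv ?_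
    ring
  have heq : sampleRadius k S =ᶠ[nhds η] fun t => sOf k * √(S ^ 2 * t / (1 + S ^ 2 * t)) := by
    filter_upwards [lt_mem_nhds hη] with t ht using sampleRadius_eq hk hS.le ht.le
  refine (((hφ.sqrt (by positivity)).const_mul (sOf k)).congr_of_eventuallyEq heq).congr_deriv ?_
  have hpos : 0 < √(S ^ 2 * η / (1 + S ^ 2 * η)) := sqrt_pos.2 (by positivity)
  rw [sampleRadius_eq hk hS.le hη.le]
  field_simp

lemma sampleRadius_mul_deriv_mul (hk : 0 < k) (hS : 0 < S) (hη : 0 < η) :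
    sampleRadius k S η * deriv (sampleRadius k S) η *
      (4 / (1 - k * sampleRadius k S η ^ 2) ^ 2) = 2 * sOf k ^ 2 * S ^ 2 := by
  have hpos := sampleRadius_pos hk hS hη
  rw [(hasDerivAt_sampleRadius hk hS hη).deriv, k_mul_sampleRadius_sq hk hS.le hη.le]
  field_simp
  ring

theorem smul_map_ptPolar_sampleRadius (hk : 0 < k) (hS : 0 < S) :
    ENNReal.ofReal (2 * sOf k ^ 2 * S ^ 2) •
        (volume.restrict (Ioc (0 : ℝ) 1 ×ˢ Ioc 0 (2 * π))).map
          (fun p => ptPolar (sampleRadius k S p.1) p.2) =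
      (hypArea k).restrict (Metric.closedBall 0 (sampleRadius k S 1)) := by
  set g := sampleRadius k S
  set W : Pt → ℝ≥0∞ := fun x => ENNReal.ofReal (4 / (1 - k * ‖x‖ ^ 2) ^ 2)
  have hgpos : ∀ η ∈ Ioc (0 : ℝ) 1, 0 < g η := fun η hη => sampleRadius_pos hk hS hη.1
  have hg : ∀ η ∈ Ioc (0 : ℝ) 1, HasDerivWithinAt g (deriv g η) (Ioc 0 1) η := fun η hη =>
    (hasDerivAt_sampleRadius hk hS hη.1).differentiableAt.hasDerivAt.hasDerivWithinAt
  have hdens : ∀ p ∈ Ioc (0 : ℝ) 1 ×ˢ Ioc 0 (2 * π),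
      ENNReal.ofReal |g p.1 * deriv g p.1| * W (ptPolar (g p.1) p.2) =
        ENNReal.ofReal (2 * sOf k ^ 2 * S ^ 2) := by
    rintro ⟨η, θ⟩ ⟨hη, -⟩
    have hderiv : 0 < deriv g η := by
      rw [(hasDerivAt_sampleRadius hk hS hη.1).deriv]
      have := sOf_pos hk
      have := hgpos η hη
      have := hη.1
      positivity
    rw [← ENNReal.ofReal_mul (abs_nonneg _), norm_ptPolar, sq_abs,
      abs_of_pos (mul_pos (hgpos η hη) hderiv), sampleRadius_mul_deriv_mul hk hS hη.1]
  have hinj : InjOn g (Ioc 0 1) :=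
    (strictMonoOn_sampleRadius hk hS).injOn.mono fun _ h => mem_Ici.2 h.1.le
  have hmap := map_withDensity_ptPolar_radial measurableSet_Ioc
    continuous_sampleRadius.measurable (measurable_deriv _) hg hinj hgpos (W := W) (by fun_prop) 0
  rw [zero_add] at hmap
  rw [← Measure.map_smul, ← withDensity_const, ← withDensity_congr_ae (ae_restrict_of_forall_mem
      (measurableSet_Ioc.prod measurableSet_Ioc) hdens), hmap, sampleRadius_image_Ioc hk hS,
    ← restrict_hypArea_norm_mem_Ioc, hypArea]
  exact (restrict_withDensity (measurableSet_Ioc.preimage measurable_norm) W).symm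

end

/-- correctness of Poincaré uniform sampling. The pushforward under
`F(η, ζ) = (α cos ζ, α sin ζ)`, with `τ = 2s·arsinh(√η·sinh(R_H/(2s)))` and
`α = s(e^{τ/s} − 1)/(e^{τ/s} + 1)`, of the product of the uniform probability measures on
`(0,1]` and `(0,2π]` equals the hyperbolic-uniform distribution `ν_R`. -/
theorem uniform_sampling_correct (k R : ℝ) (hk : 0 < k) (hR : 0 < R) (hRs : R < sOf k) :
    Measure.map
      (fun p : ℝ × ℝ =>
        ptPolar
          (eucOfHyp k
            (2 * sOf k * Real.arsinh (Real.sqrt p.1 * Real.sinh (RH k R / (2 * sOf k)))))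
          p.2)
      ((volume.restrict (Set.Ioc (0 : ℝ) 1)).prod
        ((ENNReal.ofReal (2 * π))⁻¹ • volume.restrict (Set.Ioc (0 : ℝ) (2 * π)))) =
    nu k R := by
  set S := sinh (RH k R / (2 * sOf k))
  change Measure.map (fun p : ℝ × ℝ => ptPolar (sampleRadius k S p.1) p.2) _ = _
  have hs := sOf_pos hk
  have hS : 0 < S := sinh_pos_iff.2 (div_pos (RH_pos hk hR hRs) (by positivity))
  have hR1 : sampleRadius k S 1 = R := by
    rw [sampleRadius, sqrt_one, one_mul, arsinh_sinh, mul_div_cancel₀ _ (by positivity),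
      eucOfHyp_RH hk hR hRs]
  have h2π : ENNReal.ofReal (2 * π) ≠ 0 := by simp [pi_pos]
  have : IsProbabilityMeasure (volume.restrict (Ioc (0 : ℝ) 1)) := ⟨by simp⟩
  have : IsProbabilityMeasure
      ((ENNReal.ofReal (2 * π))⁻¹ • volume.restrict (Ioc (0 : ℝ) (2 * π))) := ⟨by
    rw [Measure.smul_apply, Measure.restrict_apply_univ, Real.volume_Ioc, sub_zero, smul_eq_mul,
      ENNReal.inv_mul_cancel h2π ENNReal.ofReal_ne_top]⟩
  have hF : Measurable fun p : ℝ × ℝ => ptPolar (sampleRadius k S p.1) p.2 :=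
    measurable_ptPolar.comp (continuous_sampleRadius.measurable.prodMap measurable_id)
  rw [nu, ← Measure.restrict_apply_univ]
  refine eq_inv_measure_univ_smul_of_eq_smul (hP := Measure.isProbabilityMeasure_map hF.aemeasurable)
    (c := (ENNReal.ofReal (2 * π))⁻¹ * (ENNReal.ofReal (2 * sOf k ^ 2 * S ^ 2))⁻¹) ?_
  rw [← hR1, ← smul_map_ptPolar_sampleRadius hk hS, Measure.prod_smul_right,
    Measure.prod_restrict, ← Measure.volume_eq_prod, Measure.map_smul, smul_smul, mul_assoc,
    ENNReal.inv_mul_cancel (by simp; positivity) ENNReal.ofReal_ne_top, mul_one]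

end HypFL
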